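/- Let d ≥ 1 and N ≥ 1, let Σ₀,…,Σ_N be symmetric positive semidefinite d × d real matrices, and define the 2d × 2d matrices Q = [[12,−6],[−6,4]] ⊗ I_d and Φ = [[1,1],[0,1]] ⊗ I_d (Kronecker products with the d × d identity). For 2d × 2d matrices Σ̂₀,…,Σ̂_N and S₀,…,S_{N−1}, define the cost L = Σ_{i=0}^{N−1} Tr( Q·Σ̂_{i+1} + Φᵀ·Q·Φ·Σ̂_i − 2·Q·Φ·S_i ). Then the following two infima are equal: (1) the infimum of L over all symmetric positive semidefinite 2d(N+1) × 2d(N+1) matrices Σ̂ whose (i,i) 2d × 2d diagonal block Σ̂_i has upper-left d × d block equal to Σ_i for every i = 0,…,N, where S_i denotes the (i,i+1) 2d × 2d block of Σ̂; and (2) the infimum of L over all tuples (Σ̂₀,…,Σ̂_N, S₀,…,S_{N−1}) of 2d × 2d matrices such that for every i = 0,…,N−1 the block matrix [[Σ̂_i, S_i],[S_iᵀ, Σ̂_{i+1}]] is positive semidefinite, and the upper-left d × d block of Σ̂_i equals Σ_i for every i = 0,…,N. -/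

import Mathlib

open Matrix Kronecker

noncomputable section

/-- `Q = [[12,−6],[−6,4]] ⊗ I_d`. -/
def Qmat (d : ℕ) : Matrix (Fin 2 × Fin d) (Fin 2 × Fin d) ℝ :=
  (!![12, -6; -6, 4] : Matrix (Fin 2) (Fin 2) ℝ) ⊗ₖ (1 : Matrix (Fin d) (Fin d) ℝ)

/-- `Φ = [[1,1],[0,1]] ⊗ I_d`. -/
def Phimat (d : ℕ) : Matrix (Fin 2 × Fin d) (Fin 2 × Fin d) ℝ :=
  (!![1, 1; 0, 1] : Matrix (Fin 2) (Fin 2) ℝ) ⊗ₖ (1 : Matrix (Fin d) (Fin d) ℝ)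

/-- The SDP cost `L = Σ_{i=0}^{N−1} Tr(Q Σ̂_{i+1} + Φᵀ Q Φ Σ̂_i − 2 Q Φ S_i)`. -/
def sdpCost (d N : ℕ)
    (Sh : Fin (N + 1) → Matrix (Fin 2 × Fin d) (Fin 2 × Fin d) ℝ)
    (S : Fin N → Matrix (Fin 2 × Fin d) (Fin 2 × Fin d) ℝ) : ℝ :=
  ∑ i : Fin N,
    (Qmat d * Sh i.succ + (Phimat d)ᵀ * Qmat d * Phimat d * Sh i.castSucc
      - (2:ℝ) • (Qmat d * Phimat d * S i)).trace

open scoped InnerProductSpace ComplexOrder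

/-! Both infima are of the same cost, which only sees the diagonal blocks `Σ̂ᵢ` and the
superdiagonal blocks `Sᵢ`, so it suffices that both feasible sets produce the same such blocks.
Consecutive principal `2 × 2`-block submatrices of a positive semidefinite matrix are positive
semidefinite. Conversely, write each link `[[Σ̂ᵢ, Sᵢ], [Sᵢᵀ, Σ̂ᵢ₊₁]]` as the Gram matrix of vectors
in one finite-dimensional inner product space. Consecutive links share the Gram matrix `Σ̂ᵢ₊₁`,
so a linear isometry moves the vectors of link `i + 1` onto those already chosen for node `i + 1`;
gluing along the chain yields vectors for all nodes, whose Gram matrix is the required completion. -/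

section Gram

variable {𝕜 : Type*} [RCLike 𝕜] {V : Type*} [NormedAddCommGroup V] [InnerProductSpace 𝕜 V]
  {κ : Type*}

open scoped MatrixOrder in
theorem Matrix.PosSemidef.exists_gram_eq [Fintype κ] [DecidableEq κ] {X : Matrix κ κ 𝕜}
    (hX : X.PosSemidef) : ∃ v : κ → EuclideanSpace 𝕜 κ, gram 𝕜 v = X := by
  set B := CFC.sqrt X
  have hB : Bᴴ * B = X := by
    rw [← star_eq_conjTranspose, (CFC.sqrt_nonneg X).isSelfAdjoint.star_eq,
      CFC.sqrt_mul_sqrt_self X hX.nonneg]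
  refine ⟨fun a => WithLp.toLp 2 (Bᵀ a), ?_⟩
  rw [gram_eq_conjTranspose_mul (EuclideanSpace.basisFun κ 𝕜), ← hB]
  congr

theorem Matrix.gram_comp (v : κ → V) {ι : Type*} (e : ι → κ) :
    gram 𝕜 (v ∘ e) = (gram 𝕜 v).submatrix e e := rfl

theorem Matrix.gram_linearIsometry_comp {W : Type*} [NormedAddCommGroup W]
    [InnerProductSpace 𝕜 W] (E : V →ₗᵢ[𝕜] W) (v : κ → V) : gram 𝕜 (E ∘ v) = gram 𝕜 v := by
  ext a b
  exact E.inner_map_map (v a) (v b)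

variable [Fintype κ]

theorem norm_linearCombination_eq_of_gram_eq {u f : κ → V} (h : gram 𝕜 u = gram 𝕜 f)
    (c : κ → 𝕜) :
    ‖Fintype.linearCombination 𝕜 u c‖ = ‖Fintype.linearCombination 𝕜 f c‖ := by
  have hsq : ((‖Fintype.linearCombination 𝕜 u c‖ : 𝕜)) ^ 2 =
      (‖Fintype.linearCombination 𝕜 f c‖ : 𝕜) ^ 2 := by
    simp only [← inner_self_eq_norm_sq_to_K, Fintype.linearCombination_apply,
      ← star_dotProduct_gram_mulVec, h]
  exact (sq_eq_sq₀ (norm_nonneg _) (norm_nonneg _)).1 (by exact_mod_cast hsq)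

theorem exists_linearIsometry_comp_eq_of_gram_eq [FiniteDimensional 𝕜 V] {u f : κ → V}
    (h : gram 𝕜 u = gram 𝕜 f) : ∃ E : V →ₗᵢ[𝕜] V, E ∘ u = f := by
  classical
  set T := Fintype.linearCombination 𝕜 u
  set T' := Fintype.linearCombination 𝕜 f
  have hker : LinearMap.ker T ≤ LinearMap.ker T' := fun c hc => by
    rw [LinearMap.mem_ker, ← norm_eq_zero, ← norm_linearCombination_eq_of_gram_eq h,
      (LinearMap.mem_ker).1 hc, norm_zero]
  set L₀ := (LinearMap.ker T).liftQ T' hker ∘ₗ T.quotKerEquivRange.symm.toLinearMap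
  have hL₀ (c : κ → 𝕜) : L₀ ⟨T c, LinearMap.mem_range_self T c⟩ = T' c := by
    simp [L₀, LinearMap.quotKerEquivRange_symm_apply_image]
  let L : LinearMap.range T →ₗᵢ[𝕜] V :=
    { L₀ with
      norm_map' := by
        rintro ⟨_, c, rfl⟩
        exact (congrArg norm (hL₀ c)).trans (norm_linearCombination_eq_of_gram_eq h c).symm }
  refine ⟨L.extend, funext fun a => ?_⟩
  have hT (g : κ → V) : Fintype.linearCombination 𝕜 g (Pi.single a 1) = g a := by
    rw [Fintype.linearCombination_apply_single, one_smul]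
  calc L.extend (u a) = L ⟨T (Pi.single a 1), LinearMap.mem_range_self T _⟩ := by
        rw [← L.extend_apply]; simp only [T, hT]
    _ = f a := (hL₀ _).trans (hT f)

theorem exists_gram_sum_elim_eq [FiniteDimensional 𝕜 V] {ι : Type*} {u f : κ → V}
    (h : gram 𝕜 u = gram 𝕜 f) (w : ι → V) :
    ∃ g : ι → V, gram 𝕜 (Sum.elim f g) = gram 𝕜 (Sum.elim u w) := by
  obtain ⟨E, rfl⟩ := exists_linearIsometry_comp_eq_of_gram_eq h
  exact ⟨E ∘ w, by rw [← Sum.comp_elim, gram_linearIsometry_comp]⟩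

theorem exists_chain_of_gram_eq [FiniteDimensional 𝕜 V] {N : ℕ} (v : Fin (N + 1) → κ ⊕ κ → V)
    (hv : ∀ i : Fin N, gram 𝕜 (v i.castSucc ∘ Sum.inr) = gram 𝕜 (v i.succ ∘ Sum.inl)) :
    ∃ f : Fin (N + 2) → κ → V,
      ∀ i : Fin (N + 1), gram 𝕜 (Sum.elim (f i.castSucc) (f i.succ)) = gram 𝕜 (v i) := by
  induction N with
  | zero =>
    refine ⟨![v 0 ∘ Sum.inl, v 0 ∘ Sum.inr], fun i => ?_⟩
    rw [Fin.fin_one_eq_zero i]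
    simp
  | succ N ih =>
    obtain ⟨f, hf⟩ := ih (v ∘ Fin.castSucc) fun i => by
      simpa only [Function.comp_apply, Fin.succ_castSucc] using hv i.castSucc
    have hlast : gram 𝕜 (v (Fin.last (N + 1)) ∘ Sum.inl) = gram 𝕜 (f (Fin.last (N + 1))) := by
      rw [← Fin.succ_last, ← hv (Fin.last N), gram_comp]
      exact (congrArg (·.submatrix Sum.inr Sum.inr) (hf (Fin.last N))).symm
    obtain ⟨g, hg⟩ := exists_gram_sum_elim_eq hlast (v (Fin.last (N + 1)) ∘ Sum.inr)
    refine ⟨Fin.snoc f g, Fin.lastCases ?_ fun i => ?_⟩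
    · simpa [Fin.snoc_castSucc, Fin.snoc_last] using hg
    · rw [Fin.succ_castSucc, Fin.snoc_castSucc, Fin.snoc_castSucc]
      exact hf i

end Gram

theorem Matrix.PosSemidef.fromBlocks_submatrix_prodMk {R : Type*} [Ring R] [PartialOrder R]
    [StarRing R] {ι κ : Type*} {M : Matrix (ι × κ) (ι × κ) R} (hM : M.PosSemidef) (i j : ι) :
    (fromBlocks (M.submatrix (Prod.mk i) (Prod.mk i)) (M.submatrix (Prod.mk i) (Prod.mk j))
      (M.submatrix (Prod.mk i) (Prod.mk j))ᴴ (M.submatrix (Prod.mk j) (Prod.mk j))).PosSemidef := by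
  convert hM.submatrix (Sum.elim (Prod.mk i) (Prod.mk j)) using 1
  ext (a | a) (b | b) <;> simp [hM.isHermitian.apply]

section Completion

variable {𝕜 : Type*} [RCLike 𝕜] {κ : Type*} [Fintype κ] [DecidableEq κ]

theorem Matrix.exists_posSemidef_of_posSemidef_fromBlocks {N : ℕ} (D : Fin (N + 2) → Matrix κ κ 𝕜)
    (C : Fin (N + 1) → Matrix κ κ 𝕜)
    (h : ∀ i, (fromBlocks (D i.castSucc) (C i) (C i)ᴴ (D i.succ)).PosSemidef) :
    ∃ M : Matrix (Fin (N + 2) × κ) (Fin (N + 2) × κ) 𝕜, M.PosSemidef ∧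
      (∀ i, M.submatrix (Prod.mk i) (Prod.mk i) = D i) ∧
      ∀ i, M.submatrix (Prod.mk i.castSucc) (Prod.mk i.succ) = C i := by
  choose v hv using fun i => (h i).exists_gram_eq
  obtain ⟨f, hf⟩ := exists_chain_of_gram_eq (𝕜 := 𝕜) v fun i => by
    rw [gram_comp, gram_comp, hv, hv, Fin.succ_castSucc]
    rfl
  replace hf : ∀ i, gram 𝕜 (Sum.elim (f i.castSucc) (f i.succ)) =
      fromBlocks (D i.castSucc) (C i) (C i)ᴴ (D i.succ) := fun i => (hf i).trans (hv i)
  refine ⟨gram 𝕜 fun p => f p.1 p.2, posSemidef_gram 𝕜 _, Fin.lastCases ?_ fun i => ?_,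
    fun i => congrArg (·.submatrix Sum.inl Sum.inr) (hf i)⟩
  · rw [← Fin.succ_last]
    exact congrArg (·.submatrix Sum.inr Sum.inr) (hf (Fin.last N))
  · exact congrArg (·.submatrix Sum.inl Sum.inl) (hf i)

end Completion

theorem stmt16_general (d N : ℕ) (hN : 1 ≤ N)
    (Sig : Fin (N + 1) → Matrix (Fin d) (Fin d) ℝ) :
    sInf { y : ℝ |
        ∃ M : Matrix (Fin (N + 1) × (Fin 2 × Fin d)) (Fin (N + 1) × (Fin 2 × Fin d)) ℝ,
          M.PosSemidef ∧
          (∀ (i : Fin (N + 1)) (k l : Fin d),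
            M (i, ((0 : Fin 2), k)) (i, ((0 : Fin 2), l)) = Sig i k l) ∧
          y = sdpCost d N (fun i a b => M (i, a) (i, b))
                (fun i a b => M (i.castSucc, a) (i.succ, b)) }
      =
      sInf { y : ℝ |
        ∃ Sh : Fin (N + 1) → Matrix (Fin 2 × Fin d) (Fin 2 × Fin d) ℝ,
        ∃ S : Fin N → Matrix (Fin 2 × Fin d) (Fin 2 × Fin d) ℝ,
          (∀ i : Fin N,
            (Matrix.fromBlocks (Sh i.castSucc) (S i) (S i)ᵀ (Sh i.succ)).PosSemidef) ∧
          (∀ (i : Fin (N + 1)) (k l : Fin d),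
            Sh i ((0 : Fin 2), k) ((0 : Fin 2), l) = Sig i k l) ∧
          y = sdpCost d N Sh S } := by
  obtain ⟨N, rfl⟩ : ∃ n, N = n + 1 := ⟨N - 1, by omega⟩
  congr 1
  ext y
  constructor
  · rintro ⟨M, hM, hSig, rfl⟩
    refine ⟨_, _, fun i => ?_, hSig, rfl⟩
    have h := hM.fromBlocks_submatrix_prodMk i.castSucc i.succ
    rwa [conjTranspose_eq_transpose_of_trivial] at h
  · rintro ⟨Sh, S, hS, hSig, rfl⟩
    obtain ⟨M, hM, hdiag, hoff⟩ := exists_posSemidef_of_posSemidef_fromBlocks Sh S fun i => by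
      rw [conjTranspose_eq_transpose_of_trivial]
      exact hS i
    refine ⟨M, hM, fun i k l => ?_, ?_⟩
    · rw [← hSig, ← hdiag]; rfl
    · congr
      · exact (funext hdiag).symm
      · exact (funext hoff).symm

/-- The full SDP over a PSD `2d(N+1) × 2d(N+1)` matrix with prescribed position-position
diagonal blocks has the same optimal value as the relaxed SDP in which only the
consecutive `2×2`-block submatrices `[[Σ̂ᵢ, Sᵢ],[Sᵢᵀ, Σ̂ᵢ₊₁]]` are required PSD. -/
theorem stmt16 (d N : ℕ) (hd : 1 ≤ d) (hN : 1 ≤ N)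
    (Sig : Fin (N + 1) → Matrix (Fin d) (Fin d) ℝ)
    (hSig : ∀ i, (Sig i).PosSemidef) :
    sInf { y : ℝ |
        ∃ M : Matrix (Fin (N + 1) × (Fin 2 × Fin d)) (Fin (N + 1) × (Fin 2 × Fin d)) ℝ,
          M.PosSemidef ∧
          (∀ (i : Fin (N + 1)) (k l : Fin d),
            M (i, ((0 : Fin 2), k)) (i, ((0 : Fin 2), l)) = Sig i k l) ∧
          y = sdpCost d N (fun i a b => M (i, a) (i, b))
                (fun i a b => M (i.castSucc, a) (i.succ, b)) }
      =
      sInf { y : ℝ |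
        ∃ Sh : Fin (N + 1) → Matrix (Fin 2 × Fin d) (Fin 2 × Fin d) ℝ,
        ∃ S : Fin N → Matrix (Fin 2 × Fin d) (Fin 2 × Fin d) ℝ,
          (∀ i : Fin N,
            (Matrix.fromBlocks (Sh i.castSucc) (S i) (S i)ᵀ (Sh i.succ)).PosSemidef) ∧
          (∀ (i : Fin (N + 1)) (k l : Fin d),
            Sh i ((0 : Fin 2), k) ((0 : Fin 2), l) = Sig i k l) ∧
          y = sdpCost d N Sh S } :=
  stmt16_general d N hN Sig
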